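/- The global section a := ∂¹(1) ∈ Γ(X, 𝔸_red^1(O_X)) acts on K_X^q like (−1)^{q+1} δ: for any φ ∈ K_X^q one has φ · ∂¹(1) = (−1)^{q+1} δ(φ). -/

import Mathlib

/-!
# Framework: chains of points, Beilinson completions, adeles, and the residue complex

We formalize the geometric combinatorics (chains of points of a scheme, reduced and
saturated chains), and we axiomatize, as a structure `AdelicResidueTheory`, the data of:

* the Beilinson completions `𝒪_{X,ξ}` of the structure sheaf along chains of points
  (`Oc`), with the canonical extension ring homomorphisms along subchains (`extSeg`)
  and faces (`extFace`);
* the Beilinson adele groups `𝔸(T, 𝒪_X)` as subrings of products of completions (`A`),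
  closed under the Alexander-Whitney product and the simplicial coboundary;
* the dual modules `K(𝒪_{X,ξ})` of Beilinson completion algebras (`Kc`), together with
  the intensification maps `q_{∂⁻}` (`qres`) and traces `Tr_{∂⁺}` (`tres`) along
  saturated chains, from which Grothendieck's residue complex `K_X^·` is assembled.
-/

noncomputable section

open AlgebraicGeometry CategoryTheory TopologicalSpace DirectSum

universe u

namespace AdelicResidues

/-- A chain of length `q` of points of a scheme `X`: points `x_0, …, x_q` with
`x_{i+1} ∈ closure {x_i}`.  (The function `pt` is normalized to be constant from
index `q` on, so that a chain is determined by `x_0, …, x_q`.) -/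
@[ext]
structure PtChain (X : Scheme.{u}) (q : ℕ) where
  pt : ℕ → X
  spec : ∀ i, i < q → pt (i + 1) ∈ closure ({pt i} : Set X)
  tail : ∀ i, q ≤ i → pt i = pt q

namespace PtChain

variable {X : Scheme.{u}} {q : ℕ}

lemma ext' {ξ η : PtChain X q} (h : ∀ i, ξ.pt i = η.pt i) : ξ = η :=
  PtChain.ext (funext h)

/-- The first point of a chain. -/
def head (ξ : PtChain X q) : X := ξ.pt 0

/-- The last point of a chain. -/
def last (ξ : PtChain X q) : X := ξ.pt q

/-- The length-zero chain `(x)`. -/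
def single (X : Scheme.{u}) (x : X) : PtChain X 0 where
  pt _ := x
  spec i h := absurd h (Nat.not_lt_zero i)
  tail _ _ := rfl

/-- A chain is reduced if it has no repeated points. -/
def Reduced (ξ : PtChain X q) : Prop := ∀ i, i < q → ξ.pt i ≠ ξ.pt (i + 1)

/-- `y` is an immediate specialization of `x`. -/
def ImmediateSpec (X : Scheme.{u}) (x y : X) : Prop :=
  y ∈ closure ({x} : Set X) ∧ x ≠ y ∧
    ∀ z : X, z ∈ closure ({x} : Set X) → y ∈ closure ({z} : Set X) → z = x ∨ z = y

/-- A chain is saturated if each point is an immediate specialization of the previous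
one. -/
def Saturated (ξ : PtChain X q) : Prop :=
  ∀ i, i < q → ImmediateSpec X (ξ.pt i) (ξ.pt (i + 1))

lemma mem_closure_trans {x y z : X} (h1 : y ∈ closure ({x} : Set X))
    (h2 : z ∈ closure ({y} : Set X)) : z ∈ closure ({x} : Set X) :=
  closure_minimal (Set.singleton_subset_iff.mpr h1) isClosed_closure h2

/-- The segment `(x_p, …, x_{p+r})` of a chain (extended constantly at the end if
necessary). -/
def seg (p r : ℕ) (ξ : PtChain X q) : PtChain X r where
  pt i := ξ.pt (min (p + min i r) q)
  spec i hi := by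
    rcases le_or_gt q (p + i) with h | h
    · have h1 : min (p + min i r) q = q := by omega
      have h2 : min (p + min (i + 1) r) q = q := by omega
      rw [h1, h2]
      exact subset_closure (Set.mem_singleton _)
    · have h1 : min (p + min i r) q = p + i := by omega
      have h2 : min (p + min (i + 1) r) q = p + i + 1 := by omega
      rw [h1, h2]
      exact ξ.spec (p + i) h
  tail i hi := by
    have h1 : min i r = r := by omega
    simp [h1]

/-- The `j`-th face of a chain, omitting the `j`-th point. -/
def face (j : ℕ) (ξ : PtChain X (q + 1)) : PtChain X q where
  pt i := if min i q < j then ξ.pt (min i q) else ξ.pt (min i q + 1)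
  spec i hi := by
    have h1 : min i q = i := by omega
    have h2 : min (i + 1) q = i + 1 := by omega
    simp only [h1, h2]
    by_cases hij : i + 1 < j
    · rw [if_pos (by omega), if_pos hij]
      exact ξ.spec i (by omega)
    · by_cases hij2 : i < j
      · rw [if_pos hij2, if_neg hij]
        exact mem_closure_trans (ξ.spec i (by omega)) (ξ.spec (i + 1) (by omega))
      · rw [if_neg hij2, if_neg hij]
        exact ξ.spec (i + 1) (by omega)
  tail i hi := by
    have h1 : min i q = q := by omega
    simp [h1]

/-- Concatenation of a chain from `x` to `y` and a chain from `y` to `z`. -/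
def concat {p r : ℕ} (ξ : PtChain X p) (η : PtChain X r) (h : ξ.last = η.head) :
    PtChain X (p + r) where
  pt i := if i ≤ p then ξ.pt i else η.pt (i - p)
  spec i hi := by
    by_cases h1 : i + 1 ≤ p
    · rw [if_pos h1, if_pos (by omega)]
      exact ξ.spec i (by omega)
    · by_cases h2 : i ≤ p
      · have hip : i = p := by omega
        rw [if_neg h1, if_pos h2]
        have h3 : i + 1 - p = 1 := by omega
        rw [h3, hip]
        rw [show ξ.pt p = η.pt 0 from h]
        exact η.spec 0 (by omega)
      · rw [if_neg h1, if_neg h2]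
        have h3 : i + 1 - p = (i - p) + 1 := by omega
        rw [h3]
        exact η.spec (i - p) (by omega)
  tail i hi := by
    by_cases h1 : i ≤ p
    · have hip : i = p := by omega
      have hr : r = 0 := by omega
      subst hip; subst hr
      simp
    · rw [if_neg h1, η.tail (i - p) (by omega)]
      by_cases h2 : p + r ≤ p
      · have hr : r = 0 := by omega
        rw [if_pos h2]
        have e1 : ξ.pt (p + r) = η.pt 0 := by
          rw [show p + r = p by omega]; exact h
        rw [e1, congrArg η.pt hr]
      · rw [if_neg h2]
        congr 1
        omega

lemma concat_head {p r : ℕ} (ξ : PtChain X p) (η : PtChain X r) (h : ξ.last = η.head) :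
    (ξ.concat η h).head = ξ.head := by
  simp [concat, head]

lemma concat_last {p r : ℕ} (ξ : PtChain X p) (η : PtChain X r) (h : ξ.last = η.head) :
    (ξ.concat η h).last = η.last := by
  show (if p + r ≤ p then ξ.pt (p + r) else η.pt (p + r - p)) = η.pt r
  by_cases h2 : p + r ≤ p
  · have hr : r = 0 := by omega
    rw [if_pos h2]
    have e1 : ξ.pt (p + r) = η.pt 0 := by
      rw [show p + r = p by omega]; exact h
    rw [e1, congrArg η.pt hr]
  · rw [if_neg h2]
    congr 1
    omega

lemma seg_concat_left {p r : ℕ} (ξ : PtChain X p) (η : PtChain X r) (h : ξ.last = η.head) :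
    (ξ.concat η h).seg 0 p = ξ := by
  apply ext'
  intro i
  show (ξ.concat η h).pt (min (0 + min i p) (p + r)) = ξ.pt i
  have h1 : min (0 + min i p) (p + r) = min i p := by omega
  rw [h1]
  show (if min i p ≤ p then ξ.pt (min i p) else η.pt (min i p - p)) = ξ.pt i
  rw [if_pos (by omega)]
  by_cases h2 : i ≤ p
  · rw [min_eq_left h2]
  · rw [min_eq_right (by omega)]
    exact (ξ.tail i (by omega)).symm

lemma seg_concat_right {p r : ℕ} (ξ : PtChain X p) (η : PtChain X r) (h : ξ.last = η.head) :
    (ξ.concat η h).seg p r = η := by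
  apply ext'
  intro i
  show (ξ.concat η h).pt (min (p + min i r) (p + r)) = η.pt i
  have h1 : min (p + min i r) (p + r) = p + min i r := by omega
  rw [h1]
  show (if p + min i r ≤ p then ξ.pt (p + min i r) else η.pt (p + min i r - p)) = η.pt i
  by_cases hm : min i r = 0
  · rw [hm, if_pos (by omega)]
    have e1 : ξ.pt (p + 0) = η.pt 0 := by rw [Nat.add_zero]; exact h
    rw [e1]
    rcases Nat.eq_zero_or_pos i with hi | hi
    · rw [hi]
    · have hr : r = 0 := by omega
      rw [η.tail i (by omega), congrArg η.pt hr]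
  · rw [if_neg (by omega)]
    have h2 : p + min i r - p = min i r := by omega
    rw [h2]
    by_cases h3 : i ≤ r
    · rw [min_eq_left h3]
    · rw [min_eq_right (by omega)]
      exact (η.tail i (by omega)).symm

lemma seg_zero_eq_single (ξ : PtChain X q) : ξ.seg 0 0 = single X ξ.head := by
  apply ext'
  intro i
  show ξ.pt (min (0 + min i 0) q) = ξ.pt 0
  congr 1
  omega

lemma seg_zero_head (ξ : PtChain X q) (r : ℕ) : (ξ.seg 0 r).head = ξ.head := by
  show ξ.pt (min (0 + min 0 r) q) = ξ.pt 0
  congr 1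

lemma face_pt_mem {U : Set X} {j : ℕ} {ξ : PtChain X (q + 1)}
    (hξ : ∀ i, ξ.pt i ∈ U) (i : ℕ) : (ξ.face j).pt i ∈ U := by
  show (if min i q < j then ξ.pt (min i q) else ξ.pt (min i q + 1)) ∈ U
  split <;> exact hξ _

end PtChain

/-- The set of reduced chains of length `q` in `X`. -/
def RedT (X : Scheme.{u}) (q : ℕ) : Set (PtChain X q) := {ξ | ξ.Reduced}

/-- The set `S(U)^red_q` of reduced chains of length `q` of points in an open `U ⊆ X`. -/
def redIn (X : Scheme.{u}) (U : X.Opens) (q : ℕ) : Set (PtChain X q) :=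
  {ξ | ξ.Reduced ∧ ∀ i, ξ.pt i ∈ U}

/-- The set of reduced chains of length `q` of points in `U` starting at `x`. -/
def startT (X : Scheme.{u}) (U : X.Opens) (x : X) (q : ℕ) : Set (PtChain X q) :=
  {ξ | ξ.Reduced ∧ (∀ i, ξ.pt i ∈ U) ∧ ξ.head = x}

lemma startT_head (X : Scheme.{u}) (U : X.Opens) (x : X) (q : ℕ) :
    ∀ ξ ∈ startT X U x q, ξ.head = x := fun _ h => h.2.2

lemma startT_face_mem (X : Scheme.{u}) (U : X.Opens) (x : X) (q : ℕ) :
    ∀ η ∈ PtChain.face 0 '' startT X U x (q + 1), ∀ i, η.pt i ∈ U := by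
  rintro η ⟨ξ, hξ, rfl⟩ i
  exact PtChain.face_pt_mem hξ.2.1 i

/-- The dimension of a point of a scheme: the Krull dimension of its closure. -/
def ptdim {X : Scheme.{u}} (x : X) : WithBot ℕ∞ :=
  topologicalKrullDim (closure ({x} : Set X))

/-- The set of points of (co)homological codimension data: points whose closure has
dimension `n`. -/
def dimSet (X : Scheme.{u}) (n : ℤ) : Set X :=
  {x | 0 ≤ n ∧ ptdim x = ((n.toNat : ℕ∞) : WithBot ℕ∞)}

/-- The Beilinson completions of the structure sheaf of `X` along chains of points,
together with the canonical extension homomorphisms and the (completed) stalk maps. -/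
structure ChainData (X : Scheme.{u}) : Type (u + 1) where
  /-- the Beilinson completion `𝒪_{X,ξ}` along the chain `ξ` -/
  Oc : ∀ {q : ℕ}, PtChain X q → CommRingCat.{u}
  /-- the canonical homomorphism `𝒪_{X,ξ'} → 𝒪_{X,ξ}` for a segment `ξ'` of `ξ`;
  for `p = 0` this is `∂⁻`, and for `p + r = q` it is `∂⁺` -/
  extSeg : ∀ {q : ℕ} (p r : ℕ) (ξ : PtChain X q), p + r ≤ q → (Oc (ξ.seg p r) →+* Oc ξ)
  /-- the canonical homomorphism `𝒪_{X,∂_j ξ} → 𝒪_{X,ξ}` along the `j`-th face -/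
  extFace : ∀ {q : ℕ} (j : ℕ) (ξ : PtChain X (q + 1)), j ≤ q + 1 → (Oc (ξ.face j) →+* Oc ξ)
  /-- the canonical homomorphism `𝒪_{X,x} → 𝒪_{X,(x)}` into the completion -/
  stalkHom : ∀ x : X, (X.presheaf.stalk x : Type u) →+* Oc (PtChain.single X x)

namespace ChainData

variable {X : Scheme.{u}} (C : ChainData X)

/-- Transport along an equality of chains. -/
def ocCast {q : ℕ} {ξ η : PtChain X q} (h : ξ = η) : C.Oc ξ →+* C.Oc η := by
  subst h; exact RingHom.id _

/-- The canonical homomorphism `𝒪_{X,(x)} → 𝒪_{X,ξ}`, `x` the initial point of `ξ`. -/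
def toChain {q : ℕ} (ξ : PtChain X q) : C.Oc (PtChain.single X ξ.head) →+* C.Oc ξ :=
  (C.extSeg 0 0 ξ (Nat.zero_le q)).comp (C.ocCast (PtChain.seg_zero_eq_single ξ).symm)

/-- The image of `b ∈ 𝒪_{X,(x)}` in `𝒪_{X,ξ}` for a chain `ξ` starting at `x`. -/
def bAt (x : X) {q : ℕ} (ξ : PtChain X q) (h : ξ.head = x)
    (b : C.Oc (PtChain.single X x)) : C.Oc ξ :=
  C.toChain ξ (C.ocCast (congrArg (PtChain.single X) h.symm) b)

/-- The product of the completions over the chains in `T`; the adeles `𝔸(T, 𝒪_X)` are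
a subring of this product, cf. `AdelicResidueTheory.A`. -/
abbrev AdeleType {q : ℕ} (T : Set (PtChain X q)) : Type u := ∀ ξ : T, C.Oc ξ.1

/-- The simplicial coboundary `∂ = Σ (-1)^j ∂^j` on (products indexed by) reduced
chains. -/
def bnd {q : ℕ} (a : C.AdeleType (RedT X q)) : C.AdeleType (RedT X (q + 1)) := by
  classical
  exact fun ξ => ∑ j : Fin (q + 2), (-1 : ℤ) ^ (j : ℕ) •
    (if h : (ξ.1.face j).Reduced then
      C.extFace j ξ.1 (Nat.lt_succ_iff.mp j.isLt) (a ⟨ξ.1.face j, h⟩) else 0)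

/-- The Alexander-Whitney product `(a · b)_ξ = ∂⁻(a)_ξ · ∂⁺(b)_ξ` of adeles. -/
def awMul {q q' : ℕ} (a : C.AdeleType (RedT X q)) (b : C.AdeleType (RedT X q')) :
    C.AdeleType (RedT X (q + q')) := by
  classical
  exact fun ξ =>
    (if h : (ξ.1.seg 0 q).Reduced then C.extSeg 0 q ξ.1 (by omega) (a ⟨_, h⟩) else 0) *
    (if h : (ξ.1.seg q q').Reduced then C.extSeg q q' ξ.1 (le_refl _) (b ⟨_, h⟩) else 0)

end ChainData

/-- The Beilinson adeles and the residue complex of a finite type scheme over a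
perfect field, axiomatized:  the adele groups `𝔸(T, 𝒪_X)` (Beilinson's restricted
products, a subring of the full product of completions), the dual modules
`K(𝒪_{X,ξ})` of the Beilinson completion algebras `𝒪_{X,ξ}` of saturated chains, and
the maps `q_{∂⁻}` and `Tr_{∂⁺}` on dual modules induced by the intensification `∂⁻`
and the morphism `∂⁺` of BCAs. -/
structure AdelicResidueTheory (X : Scheme.{u}) extends ChainData X : Type (u + 1) where
  /-- the group of adeles combinatorially supported on `T`, `𝔸(T, 𝒪_X) ⊆ Π_{ξ ∈ T} 𝒪_{X,ξ}` -/
  A : ∀ {q : ℕ} (T : Set (PtChain X q)), Subring (toChainData.AdeleType T)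
  bnd_mem : ∀ {q : ℕ} (a : toChainData.AdeleType (RedT X q)),
    a ∈ A (RedT X q) → toChainData.bnd a ∈ A (RedT X (q + 1))
  awMul_mem : ∀ {q q' : ℕ} (a : toChainData.AdeleType (RedT X q))
    (b : toChainData.AdeleType (RedT X q')),
    a ∈ A (RedT X q) → b ∈ A (RedT X q') → toChainData.awMul a b ∈ A (RedT X (q + q'))
  /-- for a set `T` of chains all starting at `x`, the diagonal embedding
  `𝒪_{X,(x)} → 𝔸(T, 𝒪_X)` -/
  diag : ∀ {q : ℕ} (T : Set (PtChain X q)) (x : X), (∀ ξ ∈ T, ξ.head = x) →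
    ((toChainData.Oc (PtChain.single X x) : Type u) →+* A T)
  diag_apply : ∀ {q : ℕ} (T : Set (PtChain X q)) (x : X) (h : ∀ ξ ∈ T, ξ.head = x)
    (b : toChainData.Oc (PtChain.single X x)) (ξ : T),
    (diag T x h b : toChainData.AdeleType T) ξ = toChainData.bAt x ξ.1 (h ξ.1 ξ.2) b
  /-- for a set `T` of chains of points of an open `U`, the diagonal embedding
  `Γ(U, 𝒪_X) → 𝔸(T, 𝒪_X)` -/
  secDiag : ∀ {q : ℕ} (T : Set (PtChain X q)) (U : X.Opens),
    (∀ ξ ∈ T, ∀ i, ξ.pt i ∈ U) →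
    ((X.presheaf.obj (Opposite.op U) : Type u) →+* A T)
  /-- the dual module `K(𝒪_{X,ξ})` of the BCA `𝒪_{X,ξ}` (of a saturated chain `ξ`) -/
  Kc : ∀ {q : ℕ} (ξ : PtChain X q), ModuleCat.{u} (toChainData.Oc ξ)
  /-- `q_{∂⁻} : K(𝒪_{X,(x)}) → K(𝒪_{X,ξ})`, induced by the intensification `∂⁻` -/
  qres : ∀ {q : ℕ} (ξ : PtChain X q), ξ.Saturated →
    (Kc (PtChain.single X ξ.head) →+ Kc ξ)
  /-- `Tr_{∂⁺} : K(𝒪_{X,ξ}) → K(𝒪_{X,(y)})`, the trace along the morphism `∂⁺` of BCAs -/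
  tres : ∀ {q : ℕ} (ξ : PtChain X q), ξ.Saturated →
    (Kc ξ →+ Kc (PtChain.single X ξ.last))

namespace AdelicResidueTheory

variable {X : Scheme.{u}} (Θ : AdelicResidueTheory X)

/-- `K_X(x) = K(𝒪_{X,(x)})`, the dual module of the completed local ring at `x`. -/
abbrev KX (x : X) : Type u := Θ.Kc (PtChain.single X x)

/-- Transport along an equality of points. -/
def kCast {x y : X} (h : x = y) (φ : Θ.KX x) : Θ.KX y := by subst h; exact φ

/-- The residue action: for a saturated chain `ξ` beginning at `x`,
`φ_x · a_ξ := Tr_{∂⁺}(a_ξ · q_{∂⁻}(φ_x)) ∈ K_X(last ξ)`, and `0` otherwise. -/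
def actOn {q : ℕ} (x : X) (ξ : PtChain X q) (φ : Θ.KX x) (a : Θ.Oc ξ) :
    Θ.KX ξ.last := by
  classical
  exact if h : ξ.Saturated ∧ ξ.head = x then
    Θ.tres ξ h.1 (a • Θ.qres ξ h.1 (Θ.kCast h.2.symm φ)) else 0

/-- The degree `m` part of the residue complex:
`K_X^m = ⊕ K_X(x)`, the sum over the points with `dim closure {x} = -m`. -/
abbrev Kdeg (m : ℤ) : Type u := ⨁ x : dimSet X (-m), Θ.KX x.1

/-- Transport along an equality of degrees. -/
def castK {m n : ℤ} (h : m = n) (φ : Θ.Kdeg m) : Θ.Kdeg n := by subst h; exact φ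

/-- The action of an adele `a = (a_ξ)` of degree `q'` on a section `φ = Σ_x φ_x` of
the residue complex: `φ · a = Σ_{x,ξ} φ_x · a_ξ`. -/
def kact {m : ℤ} {q' : ℕ} (φ : Θ.Kdeg m) (a : Θ.toChainData.AdeleType (RedT X q')) :
    Θ.Kdeg (m + q') := by
  classical
  exact ∑ᶠ (x : dimSet X (-m)) (ξ : RedT X q'),
    if h : ξ.1.last ∈ dimSet X (-(m + q')) then
      DirectSum.of (fun z : dimSet X (-(m + (q' : ℤ))) => Θ.KX z.1) ⟨ξ.1.last, h⟩
        (Θ.actOn x.1 ξ.1 (φ x) (a ξ))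
    else 0

/-- The coboundary `δ := (-1)^{q+1} Σ_{(x,y)} δ_{(x,y)}` of the residue complex, where
`δ_{(x,y)} = Tr_{∂⁺} ∘ q_{∂⁻} : K_X(x) → K_X(y)` for an immediate specialization pair. -/
def Kdiff {m : ℤ} (φ : Θ.Kdeg m) : Θ.Kdeg (m + 1) := by
  classical
  exact (((-1 : ℤˣ) ^ (m + 1) : ℤˣ) : ℤ) •
    ∑ᶠ (x : dimSet X (-m)) (ξ : PtChain X 1),
      if h : ξ.last ∈ dimSet X (-(m + 1)) then
        DirectSum.of (fun z : dimSet X (-(m + 1)) => Θ.KX z.1) ⟨ξ.last, h⟩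
          (Θ.actOn x.1 ξ (φ x) 1)
      else 0

end AdelicResidueTheory

end AdelicResidues

namespace AdelicResidues

open AdelicResidueTheory PtChain

/-- **Example 1.1**.  The global section `a := ∂¹(1) ∈ Γ(X, 𝔸_red^1(𝒪_X))` (the adele
whose component at every reduced length-1 chain is the image of `1` under the face map
`∂¹`) acts on `K_X^q` like `(-1)^{q+1} δ`:  for any `φ ∈ K_X^q` one has
`φ · ∂¹(1) = (-1)^{q+1} δ(φ)`. -/
theorem action_of_unit_adele
    (k : Type u) [Field k] [PerfectField k]
    (X : Scheme.{u}) (π : X ⟶ Spec (CommRingCat.of k))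
    [LocallyOfFiniteType π] [QuasiCompact π]
    (Θ : AdelicResidueTheory X)
    (q : ℤ) (φ : Θ.Kdeg q) :
    Θ.kact φ (fun ξ : RedT X 1 => Θ.toChainData.extFace 1 ξ.1 (by omega) 1) =
      (((-1 : ℤˣ) ^ (q + 1) : ℤˣ) : ℤ) • Θ.castK (by simp) (Θ.Kdiff φ) := by
  classical
  -- the cast is a definitional no-op
  have hcast : Θ.castK (show (q + 1 : ℤ) = q + ((1 : ℕ) : ℤ) by simp) (Θ.Kdiff φ)
      = Θ.Kdiff φ := rfl
  rw [hcast]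
  unfold AdelicResidueTheory.Kdiff AdelicResidueTheory.kact
  rw [smul_smul, ← Units.val_mul, Int.units_mul_self, Units.val_one, one_smul]
  refine finsum_congr fun x => ?_
  simp only [map_one]
  set G : PtChain X 1 → Θ.Kdeg (q + ((1 : ℕ) : ℤ)) := fun ξ =>
    if h : ξ.last ∈ dimSet X (-(q + ((1 : ℕ) : ℤ))) then
      DirectSum.of (fun z : dimSet X (-(q + ((1 : ℕ) : ℤ))) => Θ.KX z.1) ⟨ξ.last, h⟩
        (Θ.actOn x.1 ξ (φ x) 1)
    else 0 with hG
  have hsat : ∀ ξ : PtChain X 1, ¬ ξ.Reduced → G ξ = 0 := by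
    intro ξ hred
    have hns : ¬ ξ.Saturated := by
      intro hsatξ
      exact hred fun i hi => by
        interval_cases i
        exact (hsatξ 0 hi).2.1
    have hact : Θ.actOn x.1 ξ (φ x) 1 = 0 := by
      rw [AdelicResidueTheory.actOn, dif_neg (fun h => hns h.1)]
    rw [hG]
    dsimp only
    split
    · rw [hact, map_zero]
    · rfl
  have h1 : (∑ᶠ ξ : RedT X 1, G ξ.1) = ∑ᶠ ξ, G ξ := by
    rw [finsum_set_coe_eq_finsum_mem (RedT X 1) (f := G), finsum_mem_def,
      Set.indicator_eq_self.2]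
    intro ξ hξ
    by_contra hc
    exact hξ (hsat ξ hc)
  exact h1.trans (finsum_congr fun ξ => rfl)

end AdelicResidues
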